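/- Let J ≥ 1, α : Fin J → ℝ, cost functions C_j : ℝ → ℝ, and let r* : Fin J → ℝ be defined by r*_J = C_J(α_J) and r*_j = r*_{j+1} + C_j(α_j) − C_j(α_{j+1}) for j < J. Then r* itself satisfies the type-J individual rationality constraint with equality (r*_J = C_J(α_J)) and each adjacent downward incentive-compatibility constraint with equality (r*_j − C_j(α_j) = r*_{j+1} − C_j(α_{j+1}) for all j < J); consequently r* minimizes the total reward ∑_j r_j over all r : Fin J → ℝ satisfying r_J ≥ C_J(α_J) and r_j − C_j(α_j) ≥ r_{j+1} − C_j(α_{j+1}) for all j < J. -/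
import Mathlib


/-- The optimal rewards satisfy the binding constraints with equality and
minimize the total reward among feasible reward schedules. -/
theorem optimal_rewards_minimize_total
    (J : ℕ) (hJ : 1 ≤ J) (α : Fin J → ℝ) (C : Fin J → ℝ → ℝ)
    (rstar : Fin J → ℝ)
    (hlast : rstar ⟨J - 1, by omega⟩ = C ⟨J - 1, by omega⟩ (α ⟨J - 1, by omega⟩))
    (hrec : ∀ (j : ℕ) (h : j + 1 < J),
      rstar ⟨j, Nat.lt_of_succ_lt h⟩ =
        rstar ⟨j + 1, h⟩
          + C ⟨j, Nat.lt_of_succ_lt h⟩ (α ⟨j, Nat.lt_of_succ_lt h⟩)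
          - C ⟨j, Nat.lt_of_succ_lt h⟩ (α ⟨j + 1, h⟩)) :
    rstar ⟨J - 1, by omega⟩ = C ⟨J - 1, by omega⟩ (α ⟨J - 1, by omega⟩) ∧
    (∀ (j : ℕ) (h : j + 1 < J),
      rstar ⟨j, Nat.lt_of_succ_lt h⟩
          - C ⟨j, Nat.lt_of_succ_lt h⟩ (α ⟨j, Nat.lt_of_succ_lt h⟩) =
        rstar ⟨j + 1, h⟩ - C ⟨j, Nat.lt_of_succ_lt h⟩ (α ⟨j + 1, h⟩)) ∧
    ∀ r : Fin J → ℝ,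
      r ⟨J - 1, by omega⟩ ≥ C ⟨J - 1, by omega⟩ (α ⟨J - 1, by omega⟩) →
      (∀ (j : ℕ) (h : j + 1 < J),
        r ⟨j, Nat.lt_of_succ_lt h⟩
            - C ⟨j, Nat.lt_of_succ_lt h⟩ (α ⟨j, Nat.lt_of_succ_lt h⟩) ≥
          r ⟨j + 1, h⟩ - C ⟨j, Nat.lt_of_succ_lt h⟩ (α ⟨j + 1, h⟩)) →
      ∑ j, rstar j ≤ ∑ j, r j := by
  refine ⟨hlast, fun j h => by linarith [hrec j h], fun r hIR hIC => ?_⟩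
  have key : ∀ d j (h : j < J), j + d + 1 = J → rstar ⟨j, h⟩ ≤ r ⟨j, h⟩ := by
    intro d
    induction d with
    | zero =>
      intro j h hd
      have : j = J - 1 := by omega
      subst this
      rw [hlast]; exact hIR
    | succ d ih =>
      intro j h hd
      have h1 : j + 1 < J := by omega
      have h2 := ih (j + 1) h1 (by omega)
      have h3 := hrec j h1
      have h4 := hIC j h1
      have e1 : rstar ⟨j, Nat.lt_of_succ_lt h1⟩ = rstar ⟨j, h⟩ := rfl
      have e2 : r ⟨j, Nat.lt_of_succ_lt h1⟩ = r ⟨j, h⟩ := rfl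
      rw [e1] at h3
      rw [e2] at h4
      linarith
  refine Finset.sum_le_sum fun j _ => ?_
  have := key (J - 1 - j.val) j.val j.isLt (by omega)
  simpa using this
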